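/- arXiv:2411.05721 — 2 statements merged into one kernel-verified Lean document; each statement's English description precedes it below -/
import Mathlib

section
/- Let n and d be positive integers. For every u ∈ ℤ^d_{≥0} there is a direct sum decomposition of ℂ-vector spaces S_u = (I_R)_u ⊕ ψ_u(V_{|u|}), where ψ_u(V_{|u|}) is the image of the linear map ψ_u. -/
/-!
Common setup, following the paper "On the abundance of minimal border rank symmetric
tensors verifying Comon's conjecture".

* `S = ℂ[α_{i,j} : 1 ≤ i ≤ d, 1 ≤ j ≤ n]` is modeled as `MvPolynomial (Fin d × Fin n) ℂ`,
  with the `ℤ^d`-grading in which `deg α_{i,j} = e_i`; `Scomp n d u` is the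
  multidegree-`u` component (`u : Fin d → ℕ`).
* `V = ℂ[β_1,…,β_n]` is modeled as `MvPolynomial (Fin n) ℂ` with its standard grading;
  `Vcomp n N` is the degree-`N` component.
* The graded duals `T` and `P` are modeled by the same polynomial rings, with `S`
  (resp. `V`) acting by differentiation (`apolar`); `ann F` is the apolar
  (annihilator) ideal of `F`.
* A tensor `F ∈ (ℂ^n)^{⊗d}` is an element of the multidegree-`(1,…,1)` component
  `Scomp n d (fun _ => 1)` (a multilinear form in the `x_{i,j}`).
-/

open MvPolynomial Submodule Module

noncomputable section

namespace BorderComon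

/-- the multidegree-`u` graded component of `S`. -/
def Scomp (n d : ℕ) (u : Fin d → ℕ) : Submodule ℂ (MvPolynomial (Fin d × Fin n) ℂ) :=
  weightedHomogeneousSubmodule ℂ (fun p : Fin d × Fin n => Pi.single p.1 1) u

/-- the degree-`N` graded component of `V`. -/
def Vcomp (n : ℕ) (N : ℕ) : Submodule ℂ (MvPolynomial (Fin n) ℂ) :=
  homogeneousSubmodule (Fin n) ℂ N

/-- the diagonal ring map `π : S → V`, `α_{i,j} ↦ β_j`. -/
def piAlg (n d : ℕ) : MvPolynomial (Fin d × Fin n) ℂ →ₐ[ℂ] MvPolynomial (Fin n) ℂ :=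
  aeval (fun p : Fin d × Fin n => X p.2)

/-- `π` as a `ℂ`-linear map. -/
def piL (n d : ℕ) : MvPolynomial (Fin d × Fin n) ℂ →ₗ[ℂ] MvPolynomial (Fin n) ℂ :=
  (piAlg n d).toLinearMap

/-- the ring map `ρ : S → V`, `α_{1,j} ↦ β_j` and `α_{i,j} ↦ 0` for `i ≥ 2`
(rows are `0`-indexed, so the first row is row `0`). -/
def rho (n d : ℕ) : MvPolynomial (Fin d × Fin n) ℂ →ₐ[ℂ] MvPolynomial (Fin n) ℂ :=
  aeval (fun p : Fin d × Fin n => if (p.1 : ℕ) = 0 then X p.2 else 0)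

/-- the result of differentiating `F` by the monomial `X^a`:
`∂^a X^b = (∏_i b_i!/(b_i-a_i)!) X^{b-a}` (and `= 0` unless `a ≤ b`, which is
automatic since the descending factorial vanishes there). -/
def diffMon {σ : Type*} (a : σ →₀ ℕ) (F : MvPolynomial σ ℂ) : MvPolynomial σ ℂ :=
  ∑ b ∈ F.support, (F.coeff b * ∏ i ∈ a.support, ((b i).descFactorial (a i) : ℂ)) •
    monomial (b - a) (1 : ℂ)

/-- the apolarity action: `apolar F ψ = ψ ∘ F` is the result of letting `ψ` act on `F`
by differentiation, linearly in `ψ`. -/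
def apolar {σ : Type*} (F : MvPolynomial σ ℂ) : MvPolynomial σ ℂ →ₗ[ℂ] MvPolynomial σ ℂ :=
  Finsupp.lsum ℂ (fun a : σ →₀ ℕ => LinearMap.toSpanSingleton ℂ _ (diffMon a F)) ∘ₗ
    (AddMonoidAlgebra.coeffLinearEquiv ℂ).toLinearMap

/-- the apolar (annihilator) ideal `Ann(F) = {ψ : ψ ∘ F = 0}`, as a subspace. -/
def ann {σ : Type*} (F : MvPolynomial σ ℂ) : Submodule ℂ (MvPolynomial σ ℂ) :=
  LinearMap.ker (apolar F)

/-- the ideal `I_R ⊆ S` generated by the `2×2` minors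
`α_{i,j} α_{k,ℓ} − α_{i,ℓ} α_{k,j}`, `i < k`, `j < ℓ`. -/
def IR (n d : ℕ) : Ideal (MvPolynomial (Fin d × Fin n) ℂ) :=
  Ideal.span {q | ∃ i k : Fin d, ∃ j l : Fin n, i < k ∧ j < l ∧
    q = X (i, j) * X (k, l) - X (i, l) * X (k, j)}

/-- `J ⊆ S` is a (multigraded) homogeneous ideal: it is the sum of its
multigraded components. -/
def IsHomogS (n d : ℕ) (J : Ideal (MvPolynomial (Fin d × Fin n) ℂ)) : Prop :=
  Submodule.restrictScalars ℂ J = ⨆ u : Fin d → ℕ, (Submodule.restrictScalars ℂ J ⊓ Scomp n d u)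

/-- `I ⊆ V` is a homogeneous ideal: it is the sum of its graded components. -/
def IsHomogV (n : ℕ) (I : Ideal (MvPolynomial (Fin n) ℂ)) : Prop :=
  Submodule.restrictScalars ℂ I = ⨆ N : ℕ, (Submodule.restrictScalars ℂ I ⊓ Vcomp n N)

/-- the exponent redistribution underlying `ψ_u`: in the sorted list
`i_1 ≤ ⋯ ≤ i_N` of the indices of the monomial `β^γ` (value `j` occurring `γ j`
times, `N = |γ|`), row `i` receives the block of positions
`[∑_{i'<i} u i', ∑_{i'≤i} u i')`, while value `j` occupies positions
`[∑_{j'<j} γ j', ∑_{j'≤j} γ j')`; hence the exponent of `α_{i,j}` is the size of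
the intersection of these two intervals. -/
def distrib (n d : ℕ) (u : Fin d → ℕ) (γ : Fin n →₀ ℕ) : (Fin d × Fin n) →₀ ℕ :=
  Finsupp.equivFunOnFinite.symm fun p : Fin d × Fin n =>
    min (∑ i ∈ Finset.univ.filter fun i : Fin d => (i : ℕ) ≤ (p.1 : ℕ), u i)
        (∑ j ∈ Finset.univ.filter fun j : Fin n => (j : ℕ) ≤ (p.2 : ℕ), γ j)
    - max (∑ i ∈ Finset.univ.filter fun i : Fin d => (i : ℕ) < (p.1 : ℕ), u i)
          (∑ j ∈ Finset.univ.filter fun j : Fin n => (j : ℕ) < (p.2 : ℕ), γ j)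

/-- the linear map `ψ_u : V → S` sending a monomial `β_{i_1} β_{i_2} ⋯ β_{i_N}`
with `i_1 ≤ i_2 ≤ ⋯ ≤ i_N` to
`(α_{1,i_1} ⋯ α_{1,i_{u_1}}) (α_{2,i_{u_1+1}} ⋯ α_{2,i_{u_1+u_2}}) ⋯`.
(Its restriction to `Vcomp n (∑ i, u i)` is the map `ψ_u : V_{|u|} → S_u` of the
paper.) -/
def psi (n d : ℕ) (u : Fin d → ℕ) :
    MvPolynomial (Fin n) ℂ →ₗ[ℂ] MvPolynomial (Fin d × Fin n) ℂ :=
  AddMonoidAlgebra.mapDomainLinearMap ℂ ℂ (distrib n d u)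

/-- `Υ(I) = I_R + ∑_{u} ψ_u(I_{|u|}) ⊆ S`. -/
def Upsilon (n d : ℕ) (I : Ideal (MvPolynomial (Fin n) ℂ)) :
    Submodule ℂ (MvPolynomial (Fin d × Fin n) ℂ) :=
  Submodule.restrictScalars ℂ (IR n d) ⊔
    ⨆ u : Fin d → ℕ, Submodule.map (psi n d u) (Submodule.restrictScalars ℂ I ⊓ Vcomp n (∑ i, u i))

/-- the irrelevant ideal `B_X = ∏_{i=1}^d (α_{i,1},…,α_{i,n}) ⊆ S`. -/
def BX (n d : ℕ) : Ideal (MvPolynomial (Fin d × Fin n) ℂ) :=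
  ∏ i : Fin d, Ideal.span (Set.range fun j : Fin n => X (i, j))

/-- the irrelevant ideal `B_Y = (β_1,…,β_n) ⊆ V`. -/
def BY (n : ℕ) : Ideal (MvPolynomial (Fin n) ℂ) :=
  Ideal.span (Set.range X)

/-- `Σ(J) = ⊕_{a ≥ 0} ⊕_{s ∈ ℰ} π(J_{a𝟏+s}) ⊆ V`, where
`ℰ = {0, e_1, e_1+e_2, …, e_1+⋯+e_{d-1}}` (the element `s` with `m` ones is
`fun i => if i < m then 1 else 0`). -/
def SigmaMap (n d : ℕ) (J : Ideal (MvPolynomial (Fin d × Fin n) ℂ)) :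
    Submodule ℂ (MvPolynomial (Fin n) ℂ) :=
  ⨆ a : ℕ, ⨆ m : Fin d, Submodule.map (piL n d)
    (Submodule.restrictScalars ℂ J ⊓ Scomp n d (fun i => a + if (i : ℕ) < (m : ℕ) then 1 else 0))

/-- the set of tensors of rank at most `r`: sums of `r` decomposable tensors
`v_1 ⊗ ⋯ ⊗ v_d = ∏_i (∑_j v_i(j) x_{i,j})`. -/
def rankLE (n d r : ℕ) : Set (MvPolynomial (Fin d × Fin n) ℂ) :=
  {F | ∃ v : Fin r → Fin d → Fin n → ℂ,
    F = ∑ s : Fin r, ∏ i : Fin d, ∑ j : Fin n, C (v s i j) * X (i, j)}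

/-- `F` has border rank at most `r`: coefficientwise (finitely many coefficients are
involved), `F` lies in the closure of the set of tensors of rank at most `r`. -/
def brkLE (n d : ℕ) (F : MvPolynomial (Fin d × Fin n) ℂ) (r : ℕ) : Prop :=
  (fun m => coeff m F) ∈ closure ((fun G => fun m => coeff m G) '' rankLE n d r)

/-- the border rank of a tensor. -/
def brk (n d : ℕ) (F : MvPolynomial (Fin d × Fin n) ℂ) : ℕ :=
  sInf {r | brkLE n d F r}

/-- polynomials that are sums of `r` `d`-th powers of linear forms. -/
def srankLE (n d r : ℕ) : Set (MvPolynomial (Fin n) ℂ) :=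
  {p | ∃ c : Fin r → Fin n → ℂ, p = ∑ s : Fin r, (∑ j : Fin n, C (c s j) * X j) ^ d}

/-- `p` has symmetric border rank at most `r`. -/
def sbrkLE (n d : ℕ) (p : MvPolynomial (Fin n) ℂ) (r : ℕ) : Prop :=
  (fun m => coeff m p) ∈ closure ((fun q => fun m => coeff m q) '' srankLE n d r)

/-- the symmetric border rank of a degree-`d` form. -/
def sbrk (n d : ℕ) (p : MvPolynomial (Fin n) ℂ) : ℕ :=
  sInf {r | sbrkLE n d p r}

/-- `F` is a symmetric tensor: invariant under the permutations of the `d` factors. -/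
def IsSymm (n d : ℕ) (F : MvPolynomial (Fin d × Fin n) ℂ) : Prop :=
  ∀ τ : Equiv.Perm (Fin d), rename (Prod.map τ id) F = F

/-- the degree-`d` polynomial `p_F` corresponding to a symmetric tensor `F`, obtained
by identifying all the rows of variables (`x_{i,j} ↦ y_j`); `F` is the polarization
of `p_F`. -/
def pF (n d : ℕ) (F : MvPolynomial (Fin d × Fin n) ℂ) : MvPolynomial (Fin n) ℂ :=
  rename Prod.snd F

/-- `F` is concise: the contraction `(ℂ^n)^* → (ℂ^n)^{⊗(d-1)}` of the first tensor
factor, `w ↦ F(x_{1,j} := w_j)`, is injective. -/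
def Concise (n d : ℕ) (F : MvPolynomial (Fin d × Fin n) ℂ) : Prop :=
  Function.Injective fun w : Fin n → ℂ =>
    aeval (fun p : Fin d × Fin n => if (p.1 : ℕ) = 0 then C (w p.2) else X p) F

/-- the ideal `∑_{0<u<𝟏} S·Ann(F)_u` generated by the components `Ann(F)_u`,
`0 < u < 𝟏` (componentwise). -/
def midIdeal (n d : ℕ) (F : MvPolynomial (Fin d × Fin n) ℂ) :
    Ideal (MvPolynomial (Fin d × Fin n) ℂ) :=
  Ideal.span (⋃ u ∈ {u : Fin d → ℕ | 0 < u ∧ u < fun _ => 1},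
    ((ann F ⊓ Scomp n d u : Submodule ℂ (MvPolynomial (Fin d × Fin n) ℂ)) :
      Set (MvPolynomial (Fin d × Fin n) ℂ)))

/-- `F` is a *sharp* tensor:
(1) `Ann(F)` has exactly `n-1` minimal generators of multidegree `𝟏`;
(2) `dim (S/Ann F)_u = n` for all `0 < u < 𝟏`;
(3) `dim (S/(Ann(F)_{e_i+e_j}))_{s e_i + e_j} = n` for all `i ≠ j`, `1 ≤ s ≤ d-1`. -/
def Sharp (n d : ℕ) (F : MvPolynomial (Fin d × Fin n) ℂ) : Prop :=
  (finrank ℂ (ann F ⊓ Scomp n d fun _ => 1 :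
        Submodule ℂ (MvPolynomial (Fin d × Fin n) ℂ)) -
      finrank ℂ (Submodule.restrictScalars ℂ (midIdeal n d F) ⊓ Scomp n d fun _ => 1 :
        Submodule ℂ (MvPolynomial (Fin d × Fin n) ℂ)) = n - 1) ∧
  (∀ u : Fin d → ℕ, 0 < u → u < (fun _ => 1) →
    finrank ℂ (Scomp n d u ⧸ Submodule.comap (Scomp n d u).subtype (ann F)) = n) ∧
  (∀ i j : Fin d, i ≠ j → ∀ s : ℕ, 1 ≤ s → s ≤ d - 1 →
    finrank ℂ (Scomp n d (Pi.single i s + Pi.single j 1) ⧸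
      Submodule.comap (Scomp n d (Pi.single i s + Pi.single j 1)).subtype
        (Submodule.restrictScalars ℂ (Ideal.span
          ((ann F ⊓ Scomp n d (Pi.single i 1 + Pi.single j 1) :
            Submodule ℂ (MvPolynomial (Fin d × Fin n) ℂ)) :
            Set (MvPolynomial (Fin d × Fin n) ℂ))))) = n)

/- The diagonal map `π : α_{i,j} ↦ β_j` kills `I_R` and is a left inverse of `ψ_u` on `V_{|u|}`,
so the sum is direct. It is all of `S_u` because every monomial `α^a ∈ S_u` is congruent to
`ψ_u(π α^a)` modulo `I_R`: if `i₀` and `j₀` are the first nonzero row and column of `a`, one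
swap `α_{i₀,j} α_{i,j₀} ↦ α_{i₀,j₀} α_{i,j}` splits off the factor `α_{i₀,j₀}`, and `ψ_u`
splits off the same factor, because the smallest letter `j₀` of a sorted word lands in the
first nonempty row `i₀`. -/

lemma sum_filter_eq_zero_of_forall_lt {m : ℕ} {f : Fin m → ℕ} {i₀ : Fin m}
    (hf : ∀ i < i₀, f i = 0) {P : Fin m → Prop} [DecidablePred P] (hP : ∀ i, P i → i < i₀) :
    ∑ i ∈ Finset.univ.filter P, f i = 0 :=
  Finset.sum_eq_zero fun i hi => hf i (hP i (Finset.mem_filter.1 hi).2)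

lemma exists_ne_zero_forall_lt_eq_zero {m : ℕ} {f : Fin m → ℕ} (hf : f ≠ 0) :
    ∃ i₀, f i₀ ≠ 0 ∧ ∀ i < i₀, f i = 0 := by
  obtain ⟨i, hi⟩ := Function.ne_iff.1 hf
  obtain ⟨i₀, hi₀, hmin⟩ := WellFounded.has_min wellFounded_lt {i | f i ≠ 0} ⟨i, hi⟩
  exact ⟨i₀, hi₀, fun i hi => not_not.1 fun h => hmin i h hi⟩

lemma exists_eq_add_pi_single {m : ℕ} {f : Fin m → ℕ} (hf : f ≠ 0) :
    ∃ (i₀ : Fin m) (g : Fin m → ℕ), f = g + Pi.single i₀ 1 ∧ ∀ i < i₀, g i = 0 := by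
  obtain ⟨i₀, hi₀, hf₀⟩ := exists_ne_zero_forall_lt_eq_zero hf
  refine ⟨i₀, f - Pi.single i₀ 1, ?_, fun i hi => by simp [hf₀ i hi]⟩
  funext i
  by_cases h : i = i₀
  · subst h; simp; omega
  · simp [h]

lemma exists_eq_add_single {m : ℕ} {γ : Fin m →₀ ℕ} (hγ : γ ≠ 0) :
    ∃ (j₀ : Fin m) (γ' : Fin m →₀ ℕ), γ = γ' + Finsupp.single j₀ 1 ∧ ∀ j < j₀, γ' j = 0 := by
  obtain ⟨j₀, g, hg, hg₀⟩ := exists_eq_add_pi_single (DFunLike.coe_injective.ne hγ)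
  refine ⟨j₀, Finsupp.equivFunOnFinite.symm g, ?_, hg₀⟩
  ext j
  simp [congrFun hg j, Finsupp.single_eq_pi_single]

lemma disjoint_and_sup_eq_of_leftInverseOn {R M N : Type*} [Ring R] [AddCommGroup M] [Module R M]
    [AddCommGroup N] [Module R N] {π : M →ₗ[R] N} {ψ : N →ₗ[R] M} {A S : Submodule R M}
    {P : Submodule R N} (hA : A ≤ LinearMap.ker π) (hψ : P.map ψ ≤ S)
    (hπψ : ∀ v ∈ P, π (ψ v) = v) (hS : ∀ x ∈ S, π x ∈ P ∧ x - ψ (π x) ∈ A) :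
    Disjoint (A ⊓ S) (P.map ψ) ∧ (A ⊓ S) ⊔ P.map ψ = S := by
  refine ⟨Submodule.disjoint_def.2 ?_, le_antisymm (sup_le inf_le_right hψ) fun x hx => ?_⟩
  · rintro _ ⟨hA', -⟩ ⟨v, hv, rfl⟩
    rw [← hπψ v hv, LinearMap.mem_ker.1 (hA hA'), map_zero]
  · obtain ⟨hπx, hxA⟩ := hS x hx
    have hψx : ψ (π x) ∈ P.map ψ := Submodule.mem_map_of_mem hπx
    rw [← sub_add_cancel x (ψ (π x))]
    exact Submodule.add_mem_sup ⟨hxA, sub_mem hx (hψ hψx)⟩ hψx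

section Decomposition

variable {n d : ℕ}

def rowSums : ((Fin d × Fin n) →₀ ℕ) →+ (Fin d → ℕ) :=
  Finsupp.weight fun p => Pi.single p.1 1

def colSums : ((Fin d × Fin n) →₀ ℕ) →+ (Fin n →₀ ℕ) :=
  Finsupp.mapDomain.addMonoidHom Prod.snd

@[simp]
lemma rowSums_single (p : Fin d × Fin n) (k : ℕ) :
    rowSums (Finsupp.single p k) = Pi.single p.1 k := by
  simp [rowSums, Finsupp.weight_single, ← Pi.single_smul]

@[simp]
lemma colSums_single (p : Fin d × Fin n) (k : ℕ) :
    colSums (Finsupp.single p k) = Finsupp.single p.2 k := by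
  simp [colSums]

lemma rowSums_apply (a : (Fin d × Fin n) →₀ ℕ) (i : Fin d) :
    rowSums a i = ∑ j, a (i, j) := by
  induction a using Finsupp.induction_linear with
  | zero => simp
  | add f g hf hg => simp [hf, hg, Finset.sum_add_distrib]
  | single p k =>
    by_cases h : i = p.1 <;> simp [Finsupp.single_apply, Prod.ext_iff, eq_comm, h]

lemma colSums_apply (a : (Fin d × Fin n) →₀ ℕ) (j : Fin n) :
    colSums a j = ∑ i, a (i, j) := by
  induction a using Finsupp.induction_linear with
  | zero => simp
  | add f g hf hg => simp [hf, hg, Finset.sum_add_distrib]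
  | single p k =>
    by_cases h : j = p.2 <;> simp [Finsupp.single_apply, Prod.ext_iff, eq_comm, h]

lemma sum_rowSums (a : (Fin d × Fin n) →₀ ℕ) : ∑ i, rowSums a i = a.degree := by
  induction a using Finsupp.induction_linear with
  | zero => simp
  | add f g hf hg => simp [hf, hg, Finset.sum_add_distrib]
  | single p k => simp

lemma degree_colSums (a : (Fin d × Fin n) →₀ ℕ) : (colSums a).degree = a.degree :=
  Finsupp.degree_mapDomain _ _

lemma distrib_add_single {u : Fin d → ℕ} {γ : Fin n →₀ ℕ} {i₀ : Fin d} {j₀ : Fin n}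
    (hu : ∀ i < i₀, u i = 0) (hγ : ∀ j < j₀, γ j = 0) :
    distrib n d (u + Pi.single i₀ 1) (γ + Finsupp.single j₀ 1)
      = distrib n d u γ + Finsupp.single (i₀, j₀) 1 := by
  ext ⟨i, j⟩
  simp only [distrib, Finsupp.coe_equivFunOnFinite_symm, Finsupp.coe_add, Pi.add_apply,
    Finset.sum_add_distrib, Finsupp.single_eq_pi_single, Finset.sum_pi_single',
    Finset.mem_filter, Finset.mem_univ, true_and]
  simp only [Pi.single_apply, Prod.mk.injEq, Fin.ext_iff]
  have hu_le : (i : ℕ) < i₀ → ∑ i' ∈ Finset.univ.filter fun i' : Fin d => (i' : ℕ) ≤ i, u i' = 0 :=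
    fun h => sum_filter_eq_zero_of_forall_lt hu fun i' h' => by rw [Fin.lt_def]; omega
  have hu_lt : (i : ℕ) ≤ i₀ → ∑ i' ∈ Finset.univ.filter fun i' : Fin d => (i' : ℕ) < i, u i' = 0 :=
    fun h => sum_filter_eq_zero_of_forall_lt hu fun i' h' => by rw [Fin.lt_def]; omega
  have hγ_le : (j : ℕ) < j₀ → ∑ j' ∈ Finset.univ.filter fun j' : Fin n => (j' : ℕ) ≤ j, γ j' = 0 :=
    fun h => sum_filter_eq_zero_of_forall_lt hγ fun j' h' => by rw [Fin.lt_def]; omega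
  have hγ_lt : (j : ℕ) ≤ j₀ → ∑ j' ∈ Finset.univ.filter fun j' : Fin n => (j' : ℕ) < j, γ j' = 0 :=
    fun h => sum_filter_eq_zero_of_forall_lt hγ fun j' h' => by rw [Fin.lt_def]; omega
  split_ifs <;> omega

lemma distrib_zero_right (u : Fin d → ℕ) : distrib n d u 0 = 0 := by
  ext p
  simp [distrib]

lemma rowSums_distrib_and_colSums_distrib {u : Fin d → ℕ} {γ : Fin n →₀ ℕ}
    (h : ∑ i, u i = γ.degree) :
    rowSums (distrib n d u γ) = u ∧ colSums (distrib n d u γ) = γ := by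
  induction hN : γ.degree generalizing u γ with
  | zero =>
    obtain rfl : γ = 0 := (Finsupp.degree_eq_zero_iff γ).1 hN
    obtain rfl : u = 0 := funext fun i => (Finset.sum_eq_zero_iff.1 (h.trans hN)) i (by simp)
    simp [distrib_zero_right]
  | succ N ih =>
    obtain ⟨i₀, u', rfl, hu'⟩ := exists_eq_add_pi_single (f := u) (by rintro rfl; simp_all)
    obtain ⟨j₀, γ', rfl, hγ'⟩ := exists_eq_add_single (γ := γ) (by rintro rfl; simp_all)
    have hsum : ∑ i, u' i = γ'.degree := by simpa [Finset.sum_add_distrib] using h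
    obtain ⟨hrow, hcol⟩ := ih hsum (by simpa using hN)
    rw [distrib_add_single hu' hγ', map_add, map_add, hrow, hcol, rowSums_single, colSums_single]
    exact ⟨rfl, rfl⟩

lemma monomial_swap_sub_mem_IR (c : (Fin d × Fin n) →₀ ℕ) {i k : Fin d} {j l : Fin n}
    (hik : i < k) (hjl : j < l) :
    (monomial (c + Finsupp.single (i, l) 1 + Finsupp.single (k, j) 1) 1 -
        monomial (c + Finsupp.single (i, j) 1 + Finsupp.single (k, l) 1) 1 :
      MvPolynomial (Fin d × Fin n) ℂ) ∈ IR n d := by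
  have hgen : (X (i, j) * X (k, l) - X (i, l) * X (k, j) : MvPolynomial (Fin d × Fin n) ℂ)
      ∈ IR n d := Ideal.subset_span ⟨i, k, j, l, hik, hjl, rfl⟩
  convert neg_mem (Ideal.mul_mem_left _ (monomial c 1) hgen) using 1
  simp only [monomial_add_single, pow_one]
  ring

lemma ne_zero_rowSums_of_ne_zero {a : (Fin d × Fin n) →₀ ℕ} {p : Fin d × Fin n} (hp : a p ≠ 0) :
    rowSums a p.1 ≠ 0 := by
  rw [rowSums_apply]
  exact fun h => hp (Finset.sum_eq_zero_iff.1 h p.2 (Finset.mem_univ _))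

lemma ne_zero_colSums_of_ne_zero {a : (Fin d × Fin n) →₀ ℕ} {p : Fin d × Fin n} (hp : a p ≠ 0) :
    colSums a p.2 ≠ 0 := by
  rw [colSums_apply]
  exact fun h => hp (Finset.sum_eq_zero_iff.1 h p.1 (Finset.mem_univ _))

lemma exists_corner_add_single {a : (Fin d × Fin n) →₀ ℕ} {i₀ : Fin d} {j₀ : Fin n}
    (hrow : rowSums a i₀ ≠ 0) (hrow₀ : ∀ i < i₀, rowSums a i = 0)
    (hcol : colSums a j₀ ≠ 0) (hcol₀ : ∀ j < j₀, colSums a j = 0) :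
    ∃ b, rowSums (b + Finsupp.single (i₀, j₀) 1) = rowSums a ∧
      colSums (b + Finsupp.single (i₀, j₀) 1) = colSums a ∧
      (monomial a 1 - monomial (b + Finsupp.single (i₀, j₀) 1) 1 :
        MvPolynomial (Fin d × Fin n) ℂ) ∈ IR n d := by
  by_cases hcorner : a (i₀, j₀) ≠ 0
  · refine ⟨a - Finsupp.single (i₀, j₀) 1, ?_⟩
    simp only [Finsupp.sub_add_single_one_cancel hcorner, sub_self, zero_mem, and_self]
  rw [not_not] at hcorner
  obtain ⟨j, -, hj⟩ := Finset.exists_ne_zero_of_sum_ne_zero (rowSums_apply a i₀ ▸ hrow)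
  obtain ⟨i, -, hi⟩ := Finset.exists_ne_zero_of_sum_ne_zero (colSums_apply a j₀ ▸ hcol)
  have hii₀ : i₀ < i := lt_of_le_of_ne (not_lt.1 fun h => ne_zero_rowSums_of_ne_zero hi (hrow₀ _ h))
    (by rintro rfl; exact hi hcorner)
  have hjj₀ : j₀ < j := lt_of_le_of_ne (not_lt.1 fun h => ne_zero_colSums_of_ne_zero hj (hcol₀ _ h))
    (by rintro rfl; exact hj hcorner)
  obtain ⟨c, rfl⟩ : ∃ c, a = c + Finsupp.single (i₀, j) 1 + Finsupp.single (i, j₀) 1 := by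
    have hj' : (a - Finsupp.single (i, j₀) 1 : (Fin d × Fin n) →₀ ℕ) (i₀, j) ≠ 0 := by
      simpa [Finsupp.single_apply, hii₀.ne'] using hj
    exact ⟨_, by rw [Finsupp.sub_add_single_one_cancel hj', Finsupp.sub_add_single_one_cancel hi]⟩
  refine ⟨c + Finsupp.single (i, j) 1, ?_, ?_, ?_⟩
  · simp only [map_add, rowSums_single, add_right_comm]
  · simp only [map_add, colSums_single, add_right_comm]
  · rw [add_right_comm c (Finsupp.single (i, j) 1)]
    exact monomial_swap_sub_mem_IR c hii₀ hjj₀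

lemma monomial_sub_monomial_distrib_mem_IR (a : (Fin d × Fin n) →₀ ℕ) :
    (monomial a 1 - monomial (distrib n d (rowSums a) (colSums a)) 1 :
      MvPolynomial (Fin d × Fin n) ℂ) ∈ IR n d := by
  induction hN : a.degree generalizing a with
  | zero =>
    obtain rfl : a = 0 := (Finsupp.degree_eq_zero_iff a).1 hN
    simp [distrib_zero_right]
  | succ N ih =>
    have hrows : rowSums a ≠ 0 := fun h => by simp [← sum_rowSums, h] at hN
    have hcols : ⇑(colSums a) ≠ 0 := fun h => by
      simp [← degree_colSums, Finsupp.coe_eq_zero.1 h] at hN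
    obtain ⟨i₀, hrow, hrow₀⟩ := exists_ne_zero_forall_lt_eq_zero hrows
    obtain ⟨j₀, hcol, hcol₀⟩ := exists_ne_zero_forall_lt_eq_zero hcols
    obtain ⟨b, hbrow, hbcol, hab⟩ := exists_corner_add_single hrow hrow₀ hcol hcol₀
    have hbN : b.degree = N := by
      have := congrArg Finsupp.degree hbcol
      simp only [degree_colSums, map_add, Finsupp.degree_single, hN] at this
      omega
    simp only [map_add, rowSums_single, colSums_single] at hbrow hbcol
    have hb_row : ∀ i < i₀, rowSums b i = 0 := fun i hi => by
      simpa [← hbrow, hi.ne] using hrow₀ i hi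
    have hb_col : ∀ j < j₀, colSums b j = 0 := fun j hj => by
      simpa [← hbcol, hj.ne] using hcol₀ j hj
    rw [← hbrow, ← hbcol, distrib_add_single hb_row hb_col]
    convert add_mem hab (Ideal.mul_mem_right (X (i₀, j₀)) _ (ih b hbN)) using 1
    simp only [monomial_add_single, pow_one]
    ring

lemma mem_Scomp_iff {u : Fin d → ℕ} {x : MvPolynomial (Fin d × Fin n) ℂ} :
    x ∈ Scomp n d u ↔ ∀ a, coeff a x ≠ 0 → rowSums a = u :=
  Iff.rfl

lemma mem_Vcomp_iff {N : ℕ} {v : MvPolynomial (Fin n) ℂ} :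
    v ∈ Vcomp n N ↔ ∀ γ, coeff γ v ≠ 0 → γ.degree = N := by
  rw [Vcomp, mem_homogeneousSubmodule, MvPolynomial.IsHomogeneous, Finsupp.degree_eq_weight_one]
  rfl

lemma monomial_mem_Scomp {u : Fin d → ℕ} {a : (Fin d × Fin n) →₀ ℕ} (c : ℂ)
    (ha : rowSums a = u) : monomial a c ∈ Scomp n d u :=
  isWeightedHomogeneous_monomial _ _ _ ha

lemma monomial_mem_Vcomp {N : ℕ} {γ : Fin n →₀ ℕ} (c : ℂ) (hγ : γ.degree = N) :
    monomial γ c ∈ Vcomp n N :=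
  isHomogeneous_monomial _ hγ

lemma psi_monomial (u : Fin d → ℕ) (γ : Fin n →₀ ℕ) (c : ℂ) :
    psi n d u (monomial γ c) = monomial (distrib n d u γ) c :=
  AddMonoidAlgebra.mapDomainLinearMap_single _ _ _

lemma piL_monomial (a : (Fin d × Fin n) →₀ ℕ) (c : ℂ) :
    piL n d (monomial a c) = monomial (colSums a) c := by
  have : piAlg n d = rename Prod.snd := algHom_ext fun p => by simp [piAlg]
  simp [piL, this, rename_monomial, colSums]

lemma IR_le_ker_piL : (IR n d).restrictScalars ℂ ≤ LinearMap.ker (piL n d) := by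
  have h : IR n d ≤ RingHom.ker (piAlg n d) := by
    rw [IR, Ideal.span_le]
    rintro _ ⟨i, k, j, l, -, -, rfl⟩
    simp only [SetLike.mem_coe, RingHom.mem_ker, map_sub, map_mul, piAlg, aeval_X]
    ring
  exact fun x hx => LinearMap.mem_ker.2 (show piAlg n d x = 0 from RingHom.mem_ker.1 (h hx))

lemma psi_mem_Scomp {u : Fin d → ℕ} {v : MvPolynomial (Fin n) ℂ} (hv : v ∈ Vcomp n (∑ i, u i)) :
    psi n d u v ∈ Scomp n d u := by
  rw [v.as_sum, map_sum]
  refine Submodule.sum_mem _ fun γ hγ => ?_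
  rw [psi_monomial]
  exact monomial_mem_Scomp _
    (rowSums_distrib_and_colSums_distrib (mem_Vcomp_iff.1 hv γ (mem_support_iff.1 hγ)).symm).1

lemma piL_psi {u : Fin d → ℕ} {v : MvPolynomial (Fin n) ℂ} (hv : v ∈ Vcomp n (∑ i, u i)) :
    piL n d (psi n d u v) = v := by
  rw [v.as_sum, map_sum, map_sum]
  refine Finset.sum_congr rfl fun γ hγ => ?_
  rw [psi_monomial, piL_monomial,
    (rowSums_distrib_and_colSums_distrib (mem_Vcomp_iff.1 hv γ (mem_support_iff.1 hγ)).symm).2]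

lemma piL_mem_Vcomp {u : Fin d → ℕ} {x : MvPolynomial (Fin d × Fin n) ℂ}
    (hx : x ∈ Scomp n d u) : piL n d x ∈ Vcomp n (∑ i, u i) := by
  rw [x.as_sum, map_sum]
  refine Submodule.sum_mem _ fun a ha => ?_
  rw [piL_monomial]
  refine monomial_mem_Vcomp _ ?_
  rw [degree_colSums, ← sum_rowSums, mem_Scomp_iff.1 hx a (mem_support_iff.1 ha)]

lemma sub_psi_piL_mem_IR {u : Fin d → ℕ} {x : MvPolynomial (Fin d × Fin n) ℂ}
    (hx : x ∈ Scomp n d u) : x - psi n d u (piL n d x) ∈ IR n d := by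
  rw [x.as_sum, map_sum, map_sum, ← Finset.sum_sub_distrib]
  refine Ideal.sum_mem _ fun a ha => ?_
  rw [piL_monomial, psi_monomial, ← mem_Scomp_iff.1 hx a (mem_support_iff.1 ha)]
  convert Ideal.mul_mem_left _ (C (coeff a x)) (monomial_sub_monomial_distrib_mem_IR a) using 1
  simp only [mul_sub, C_mul_monomial, mul_one]

end Decomposition

theorem stmt_4_general (n d : ℕ) (u : Fin d → ℕ) :
    Disjoint (Submodule.restrictScalars ℂ (IR n d) ⊓ Scomp n d u)
        (Submodule.map (psi n d u) (Vcomp n (∑ i, u i))) ∧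
      (Submodule.restrictScalars ℂ (IR n d) ⊓ Scomp n d u) ⊔
          Submodule.map (psi n d u) (Vcomp n (∑ i, u i)) = Scomp n d u :=
  disjoint_and_sup_eq_of_leftInverseOn IR_le_ker_piL
    (Submodule.map_le_iff_le_comap.2 fun _ => psi_mem_Scomp) (fun _ => piL_psi)
    fun _ hx => ⟨piL_mem_Vcomp hx, sub_psi_piL_mem_IR hx⟩

/-- equation (4.1): for every `u ∈ ℤ^d_{≥0}`,
`S_u = (I_R)_u ⊕ ψ_u(V_{|u|})` as `ℂ`-vector spaces. -/
theorem stmt_4 (n d : ℕ) (hn : 0 < n) (hd : 0 < d) (u : Fin d → ℕ) :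
    Disjoint (Submodule.restrictScalars ℂ (IR n d) ⊓ Scomp n d u)
        (Submodule.map (psi n d u) (Vcomp n (∑ i, u i))) ∧
      (Submodule.restrictScalars ℂ (IR n d) ⊓ Scomp n d u) ⊔
          Submodule.map (psi n d u) (Vcomp n (∑ i, u i)) = Scomp n d u :=
  stmt_4_general n d u

end BorderComon
end
end

section
/- Let n and d be positive integers and let F ∈ (ℂ^n)^{⊗d} be a concise symmetric tensor with corresponding degree-d polynomial p_F. Let J ⊆ S be a homogeneous ideal with J ⊆ Ann(F) such that π(J_{(d,0,…,0)}) ⊆ π(J_𝟏). Then ρ(J) ⊆ Ann(p_F), where ρ(J) is the image ideal of J under ρ. -/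
/-!
Common setup, following the paper "On the abundance of minimal border rank symmetric
tensors verifying Comon's conjecture".

* `S = ℂ[α_{i,j} : 1 ≤ i ≤ d, 1 ≤ j ≤ n]` is modeled as `MvPolynomial (Fin d × Fin n) ℂ`,
  with the `ℤ^d`-grading in which `deg α_{i,j} = e_i`; `Scomp n d u` is the
  multidegree-`u` component (`u : Fin d → ℕ`).
* `V = ℂ[β_1,…,β_n]` is modeled as `MvPolynomial (Fin n) ℂ` with its standard grading;
  `Vcomp n N` is the degree-`N` component.
* The graded duals `T` and `P` are modeled by the same polynomial rings, with `S`
  (resp. `V`) acting by differentiation (`apolar`); `ann F` is the apolar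
  (annihilator) ideal of `F`.
* A tensor `F ∈ (ℂ^n)^{⊗d}` is an element of the multidegree-`(1,…,1)` component
  `Scomp n d (fun _ => 1)` (a multilinear form in the `x_{i,j}`).
-/

open MvPolynomial Submodule Module

noncomputable section

namespace BorderComon

/-!
Split `ψ ∈ J` into multihomogeneous components. `ρ` kills a component whose multidegree
involves a row other than the first, and agrees with `π` on a component `ψ` of multidegree
`a e₁`. Multiplying such a `ψ` by first-row monomials of degree `d - a` lands in
`J_{(d,0,…,0)}`, so by hypothesis the images under `π` of these products lie in `π(J_𝟏)`.
For multilinear `φ` and symmetric `F`, `π(φ) ∘ p_F = d! (φ ∘ F)`, hence these images kill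
`p_F`; as the degree-`(d - a)` form `π(ψ) ∘ p_F` is detected by the monomials of degree
`d - a`, it vanishes.
-/

section Apolarity

variable {σ : Type*}

def descFactorialCoeff (a b : σ →₀ ℕ) : ℂ := ∏ i ∈ a.support, ((b i).descFactorial (a i) : ℂ)

def diffMonLinear (a : σ →₀ ℕ) : MvPolynomial σ ℂ →ₗ[ℂ] MvPolynomial σ ℂ :=
  Finsupp.lsum ℂ (fun b : σ →₀ ℕ =>
    LinearMap.toSpanSingleton ℂ _ (descFactorialCoeff a b • monomial (b - a) (1 : ℂ))) ∘ₗ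
    (AddMonoidAlgebra.coeffLinearEquiv ℂ).toLinearMap

lemma diffMonLinear_eq_sum (a : σ →₀ ℕ) (F : MvPolynomial σ ℂ) :
    diffMonLinear a F =
      ∑ b ∈ F.support, (F.coeff b * descFactorialCoeff a b) • monomial (b - a) (1 : ℂ) :=
  Finset.sum_congr rfl fun _ _ => smul_smul _ _ _

lemma diffMonLinear_monomial (a b : σ →₀ ℕ) (c : ℂ) :
    diffMonLinear a (monomial b c) = (c * descFactorialCoeff a b) • monomial (b - a) (1 : ℂ) := by
  show Finsupp.sum (AddMonoidAlgebra.coeff (monomial b c)) _ = _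
  rw [sum_monomial_eq (by simp)]
  exact smul_smul _ _ _

lemma descFactorialCoeff_eq_zero {a b : σ →₀ ℕ} (h : ¬a ≤ b) : descFactorialCoeff a b = 0 := by
  obtain ⟨i, hi⟩ := not_forall.mp (mt Finsupp.le_def.mpr h)
  refine Finset.prod_eq_zero (i := i) (Finsupp.mem_support_iff.mpr (by omega)) ?_
  rw [Nat.cast_eq_zero, Nat.descFactorial_eq_zero_iff_lt]
  omega

lemma descFactorialCoeff_self (a : σ →₀ ℕ) :
    descFactorialCoeff a a = ∏ i ∈ a.support, ((a i).factorial : ℂ) :=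
  Finset.prod_congr rfl fun i _ => by rw [Nat.descFactorial_self]

lemma descFactorialCoeff_self_ne_zero (a : σ →₀ ℕ) : descFactorialCoeff a a ≠ 0 := by
  rw [descFactorialCoeff_self]
  exact Finset.prod_ne_zero_iff.mpr fun i _ => Nat.cast_ne_zero.mpr (Nat.factorial_ne_zero _)

lemma descFactorialCoeff_mul (a a' b : σ →₀ ℕ) :
    descFactorialCoeff a' b * descFactorialCoeff a (b - a') = descFactorialCoeff (a' + a) b := by
  classical
  have extend : ∀ (c : σ →₀ ℕ) (f : σ → ℕ), c.support ⊆ a'.support ∪ a.support →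
      ∏ i ∈ c.support, ((f i).descFactorial (c i) : ℂ) =
        ∏ i ∈ a'.support ∪ a.support, ((f i).descFactorial (c i) : ℂ) := fun c f hc =>
    Finset.prod_subset hc fun i _ hi => by simp [Finsupp.notMem_support_iff.mp hi]
  rw [descFactorialCoeff, descFactorialCoeff, descFactorialCoeff,
    extend a' _ Finset.subset_union_left, extend a _ Finset.subset_union_right,
    extend (a' + a) _ Finsupp.support_add, ← Finset.prod_mul_distrib]
  refine Finset.prod_congr rfl fun i _ => ?_
  rw [Finsupp.tsub_apply, Finsupp.add_apply, ← Nat.cast_mul, mul_comm,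
    ← Nat.descFactorial_mul_descFactorial (Nat.le_add_right (a' i) (a i)), Nat.add_sub_cancel_left]

lemma diffMonLinear_comp (a a' : σ →₀ ℕ) (F : MvPolynomial σ ℂ) :
    diffMonLinear a (diffMonLinear a' F) = diffMonLinear (a' + a) F := by
  induction F using MvPolynomial.induction_on' with
  | monomial b c =>
    rw [diffMonLinear_monomial, map_smul, diffMonLinear_monomial, diffMonLinear_monomial,
      smul_smul, one_mul, mul_assoc c, descFactorialCoeff_mul, tsub_tsub]
  | add p q hp hq => rw [map_add, map_add, map_add, hp, hq]

lemma apolar_monomial (F : MvPolynomial σ ℂ) (a : σ →₀ ℕ) (c : ℂ) :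
    apolar F (monomial a c) = c • diffMonLinear a F := by
  show Finsupp.sum (AddMonoidAlgebra.coeff (monomial a c)) _ = _
  rw [sum_monomial_eq (by simp), diffMonLinear_eq_sum]
  rfl

lemma apolar_apply (F ψ : MvPolynomial σ ℂ) :
    apolar F ψ = ∑ a ∈ ψ.support, ψ.coeff a • diffMonLinear a F :=
  Finset.sum_congr rfl fun a _ => by rw [diffMonLinear_eq_sum]; rfl

lemma apolar_add_left (F G ψ : MvPolynomial σ ℂ) :
    apolar (F + G) ψ = apolar F ψ + apolar G ψ := by
  simp only [apolar_apply, map_add, smul_add, Finset.sum_add_distrib]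

lemma apolar_smul_left (c : ℂ) (F ψ : MvPolynomial σ ℂ) :
    apolar (c • F) ψ = c • apolar F ψ := by
  simp only [apolar_apply, map_smul, Finset.smul_sum, smul_comm c]

lemma apolar_mul (F φ ψ : MvPolynomial σ ℂ) :
    apolar F (φ * ψ) = apolar (apolar F ψ) φ := by
  induction φ using MvPolynomial.induction_on' with
  | monomial a c =>
    induction ψ using MvPolynomial.induction_on' with
    | monomial a' c' =>
      rw [monomial_mul, apolar_monomial, apolar_monomial, apolar_monomial, map_smul,
        smul_smul, diffMonLinear_comp, mul_comm c c', add_comm a a']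
    | add p q hp hq => rw [mul_add, map_add, hp, hq, map_add, apolar_add_left]
  | add p q hp hq => rw [add_mul, map_add, hp, hq, map_add]

lemma apolar_sum_smul_sum_smul {ι κ : Type*} (s : Finset ι) (t : Finset κ) (a : ι → ℂ)
    (b : κ → ℂ) (f : ι → MvPolynomial σ ℂ) (g : κ → MvPolynomial σ ℂ) :
    apolar (∑ i ∈ s, a i • f i) (∑ j ∈ t, b j • g j) =
      ∑ i ∈ s, ∑ j ∈ t, (a i * b j) • apolar (f i) (g j) := by
  classical
  induction s using Finset.induction_on with
  | empty => simp [apolar_apply]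
  | insert i s hi ih =>
    rw [Finset.sum_insert hi, Finset.sum_insert hi, apolar_add_left, ih, apolar_smul_left,
      map_sum, Finset.smul_sum]
    simp only [map_smul, smul_smul]

def annIdeal (p : MvPolynomial σ ℂ) : Ideal (MvPolynomial σ ℂ) where
  toAddSubmonoid := (ann p).toAddSubmonoid
  smul_mem' φ ψ hψ := by
    change apolar p (φ * ψ) = 0
    rw [apolar_mul, LinearMap.mem_ker.mp hψ]
    simpa using apolar_smul_left 0 0 φ

end Apolarity

section Homogeneous

variable {σ : Type*}

lemma degree_tsub_of_le {a b : σ →₀ ℕ} (h : a ≤ b) : (b - a).degree = b.degree - a.degree := by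
  have := map_add Finsupp.degree (b - a) a
  rw [tsub_add_cancel_of_le h] at this
  omega

lemma eq_of_le_of_degree_eq {a b : σ →₀ ℕ} (h : a ≤ b) (hd : a.degree = b.degree) : a = b :=
  le_antisymm h <| tsub_eq_zero_iff_le.mp <|
    (Finsupp.degree_eq_zero_iff _).mp (by rw [degree_tsub_of_le h]; omega)

lemma degree_eq_of_mem_support {p : MvPolynomial σ ℂ} {N : ℕ} (hp : p.IsHomogeneous N)
    {b : σ →₀ ℕ} (hb : b ∈ p.support) : b.degree = N :=
  (hp.degree_eq_sum_deg_support hb).symm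

lemma diffMonLinear_of_isHomogeneous {F : MvPolynomial σ ℂ} {a : σ →₀ ℕ}
    (hF : F.IsHomogeneous a.degree) :
    diffMonLinear a F = C (F.coeff a * descFactorialCoeff a a) := by
  rw [diffMonLinear_eq_sum, Finset.sum_eq_single a, tsub_self, C_eq_smul_one, monomial_zero',
    C_1]
  · intro b hb hba
    have hab : ¬a ≤ b := fun hab =>
      hba (eq_of_le_of_degree_eq hab (degree_eq_of_mem_support hF hb).symm).symm
    rw [descFactorialCoeff_eq_zero hab, mul_zero, zero_smul]
  · intro ha
    rw [notMem_support_iff.mp ha, zero_mul, zero_smul]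

lemma apolar_isHomogeneous {p φ : MvPolynomial σ ℂ} {dp dφ : ℕ}
    (hp : p.IsHomogeneous dp) (hφ : φ.IsHomogeneous dφ) :
    (apolar p φ).IsHomogeneous (dp - dφ) := by
  rw [apolar_apply]
  refine IsHomogeneous.sum _ _ _ fun a ha => ?_
  rw [diffMonLinear_eq_sum, Finset.smul_sum]
  refine IsHomogeneous.sum _ _ _ fun b hb => ?_
  rw [smul_smul, smul_monomial, smul_eq_mul, mul_one]
  by_cases hab : a ≤ b
  · refine isHomogeneous_monomial _ ?_
    rw [degree_tsub_of_le hab, degree_eq_of_mem_support hp hb, degree_eq_of_mem_support hφ ha]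
  · rw [descFactorialCoeff_eq_zero hab, mul_zero, mul_zero, monomial_zero]
    exact isHomogeneous_zero _ _ _

lemma apolar_eq_zero_of_lt {p φ : MvPolynomial σ ℂ} {dp dφ : ℕ}
    (hp : p.IsHomogeneous dp) (hφ : φ.IsHomogeneous dφ) (h : dp < dφ) :
    apolar p φ = 0 := by
  rw [apolar_apply]
  refine Finset.sum_eq_zero fun a ha => ?_
  rw [diffMonLinear_eq_sum]
  refine (congrArg _ (Finset.sum_eq_zero fun b hb => ?_)).trans (smul_zero _)
  have hab : ¬a ≤ b := fun hab => by
    have := Finsupp.degree_mono hab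
    rw [degree_eq_of_mem_support hp hb, degree_eq_of_mem_support hφ ha] at this
    omega
  rw [descFactorialCoeff_eq_zero hab, mul_zero, zero_smul]

lemma eq_zero_of_forall_apolar_monomial_eq_zero {q : MvPolynomial σ ℂ} {N : ℕ}
    (hq : q.IsHomogeneous N)
    (h : ∀ γ : σ →₀ ℕ, γ.degree = N → apolar q (monomial γ 1) = 0) : q = 0 := by
  ext γ
  rw [coeff_zero]
  by_cases hγ : γ.degree = N
  · have := h γ hγ
    rw [apolar_monomial, one_smul, diffMonLinear_of_isHomogeneous (hγ ▸ hq), C_eq_zero] at this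
    exact (mul_eq_zero.mp this).resolve_right (descFactorialCoeff_self_ne_zero γ)
  · exact hq.coeff_eq_zero hγ

lemma apolar_eq_zero_of_forall_monomial_mul {p χ : MvPolynomial σ ℂ} {N k : ℕ}
    (hp : p.IsHomogeneous N) (hχ : χ.IsHomogeneous k)
    (h : ∀ γ : σ →₀ ℕ, γ.degree = N - k → apolar p (monomial γ 1 * χ) = 0) :
    apolar p χ = 0 :=
  eq_zero_of_forall_apolar_monomial_eq_zero (apolar_isHomogeneous hp hχ) fun γ hγ => by
    rw [← apolar_mul, h γ hγ]

end Homogeneous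

section Grading

variable {n d : ℕ}

lemma weight_rowSingle_apply (b : (Fin d × Fin n) →₀ ℕ) (i : Fin d) :
    Finsupp.weight (fun p : Fin d × Fin n => (Pi.single p.1 1 : Fin d → ℕ)) b i =
      ∑ j, b (i, j) := by
  classical
  rw [Finsupp.weight_apply, Finsupp.sum_fintype _ _ (by simp), Finset.sum_apply,
    Fintype.sum_prod_type, Finset.sum_comm]
  simp [Pi.single_apply]

lemma mem_Scomp_iff_s11 {u : Fin d → ℕ} {φ : MvPolynomial (Fin d × Fin n) ℂ} :
    φ ∈ Scomp n d u ↔ ∀ b ∈ φ.support, ∀ i, ∑ j, b (i, j) = u i := by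
  rw [Scomp, mem_weightedHomogeneousSubmodule]
  refine forall_congr' fun b => ?_
  simp only [MvPolynomial.mem_support_iff, _root_.funext_iff, weight_rowSingle_apply]

lemma isHomogeneous_of_mem_Scomp {u : Fin d → ℕ} {φ : MvPolynomial (Fin d × Fin n) ℂ}
    (hφ : φ ∈ Scomp n d u) : φ.IsHomogeneous (∑ i, u i) := by
  intro b hb
  show Finsupp.weight (fun _ => 1) b = _
  rw [← Finsupp.degree_eq_weight_one, Finsupp.degree_eq_sum, Fintype.sum_prod_type]
  exact Finset.sum_congr rfl fun i _ =>
    mem_Scomp_iff_s11.mp hφ b (MvPolynomial.mem_support_iff.mpr hb) i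

lemma mul_mem_Scomp {u v : Fin d → ℕ} {φ ψ : MvPolynomial (Fin d × Fin n) ℂ}
    (hφ : φ ∈ Scomp n d u) (hψ : ψ ∈ Scomp n d v) : φ * ψ ∈ Scomp n d (u + v) :=
  IsWeightedHomogeneous.mul hφ hψ

lemma piL_apply (x : MvPolynomial (Fin d × Fin n) ℂ) : piL n d x = rename Prod.snd x := by
  show aeval _ x = _
  rw [← aeval_X_left_apply (rename _ x), aeval_rename]
  rfl

lemma rho_monomial_eq_zero {b : (Fin d × Fin n) →₀ ℕ} {p : Fin d × Fin n} (hp : p ∈ b.support)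
    (hp₀ : (p.1 : ℕ) ≠ 0) (c : ℂ) : rho n d (monomial b c) = 0 := by
  rw [rho, aeval_monomial, Finsupp.prod, Finset.prod_eq_zero hp (by
    rw [if_neg hp₀, zero_pow (Finsupp.mem_support_iff.mp hp)]), mul_zero]

lemma rho_monomial_eq_piL {b : (Fin d × Fin n) →₀ ℕ} (hb : ∀ p ∈ b.support, (p.1 : ℕ) = 0)
    (c : ℂ) : rho n d (monomial b c) = piL n d (monomial b c) := by
  show aeval _ _ = aeval _ _
  rw [aeval_monomial, aeval_monomial]
  exact congrArg _ (Finsupp.prod_congr fun p hp => by rw [if_pos (hb p hp)])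

lemma rho_eq_piL_of_mem_Scomp {u : Fin d → ℕ} {ψ : MvPolynomial (Fin d × Fin n) ℂ}
    (hu : ∀ i : Fin d, (i : ℕ) ≠ 0 → u i = 0) (hψ : ψ ∈ Scomp n d u) :
    rho n d ψ = piL n d ψ := by
  conv_lhs => rw [← ψ.support_sum_monomial_coeff]
  conv_rhs => rw [← ψ.support_sum_monomial_coeff]
  rw [map_sum, map_sum]
  refine Finset.sum_congr rfl fun b hb => rho_monomial_eq_piL (fun p hp => ?_) _
  by_contra hp₀
  have hrow := mem_Scomp_iff_s11.mp hψ b hb p.1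
  rw [hu p.1 hp₀, Finset.sum_eq_zero_iff] at hrow
  exact Finsupp.mem_support_iff.mp hp (hrow p.2 (Finset.mem_univ _))

lemma rho_eq_zero_of_mem_Scomp {u : Fin d → ℕ} {ψ : MvPolynomial (Fin d × Fin n) ℂ}
    {i : Fin d} (hi : (i : ℕ) ≠ 0) (hu : u i ≠ 0) (hψ : ψ ∈ Scomp n d u) : rho n d ψ = 0 := by
  conv_lhs => rw [← ψ.support_sum_monomial_coeff]
  rw [map_sum]
  refine Finset.sum_eq_zero fun b hb => ?_
  have hrow := mem_Scomp_iff_s11.mp hψ b hb i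
  obtain ⟨j, -, hj⟩ := Finset.exists_ne_zero_of_sum_ne_zero (hrow ▸ hu)
  exact rho_monomial_eq_zero (p := (i, j)) (Finsupp.mem_support_iff.mpr hj) hi _

end Grading

section Multilinear

variable {ι κ : Type*} [Fintype ι]

def multiExp (m : ι → κ) : ι × κ →₀ ℕ := ∑ i, Finsupp.single (i, m i) 1

def colContent (m : ι → κ) : κ →₀ ℕ := (multiExp m).mapDomain Prod.snd

lemma degree_multiExp (m : ι → κ) : (multiExp m).degree = Fintype.card ι := by
  simp [multiExp, Finset.card_univ]

lemma degree_colContent (m : ι → κ) : (colContent m).degree = Fintype.card ι := by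
  rw [colContent, Finsupp.degree_mapDomain, degree_multiExp]

lemma colContent_eq_sum (m : ι → κ) : colContent m = ∑ i, Finsupp.single (m i) 1 := by
  simp only [colContent, multiExp, Finsupp.mapDomain_finsetSum, Finsupp.mapDomain_single]

lemma colContent_comp (m : ι → κ) (τ : Equiv.Perm ι) : colContent (m ∘ τ) = colContent m := by
  rw [colContent_eq_sum, colContent_eq_sum]
  exact Equiv.sum_comp τ fun i => Finsupp.single (m i) 1

variable [DecidableEq κ]

lemma multiExp_apply (m : ι → κ) (p : ι × κ) :
    multiExp m p = if m p.1 = p.2 then 1 else 0 := by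
  classical
  rw [multiExp, Finsupp.finsetSum_apply, Finset.sum_eq_single p.1]
  · simp [Finsupp.single_apply, Prod.ext_iff]
  · intro i _ hi
    simp [Prod.ext_iff, hi]
  · simp

lemma multiExp_injective : Function.Injective (multiExp (ι := ι) (κ := κ)) := by
  intro m m' h
  funext i
  simpa [multiExp_apply, eq_comm] using congrArg (· (i, m i)) h

lemma exists_multiExp_eq [Fintype κ] {b : ι × κ →₀ ℕ} (hrow : ∀ i, ∑ j, b (i, j) = 1) :
    ∃ m : ι → κ, multiExp m = b := by
  choose m hm using fun i => Finset.exists_ne_zero_of_sum_ne_zero ((hrow i).symm ▸ one_ne_zero)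
  refine ⟨m, ?_⟩
  ext ⟨i, j⟩
  have hle : ∀ s : Finset κ, ∑ j ∈ s, b (i, j) ≤ 1 := fun s =>
    hrow i ▸ Finset.sum_le_sum_of_subset (Finset.subset_univ s)
  have hmi := (hm i).2
  rw [multiExp_apply]
  dsimp only
  split_ifs with hj
  · have := hle {j}
    rw [Finset.sum_singleton] at this
    rw [← hj] at this ⊢
    omega
  · have := hle {j, m i}
    rw [Finset.sum_pair (Ne.symm hj)] at this
    omega

lemma colContent_apply (m : ι → κ) (j : κ) :
    colContent m j = Fintype.card {i // m i = j} := by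
  rw [colContent_eq_sum, Finsupp.finsetSum_apply, Fintype.card_subtype, Finset.card_filter]
  simp only [Finsupp.single_apply]

lemma exists_perm_comp_eq {m m' : ι → κ} (h : colContent m = colContent m') :
    ∃ τ : Equiv.Perm ι, m ∘ τ = m' := by
  have e : ∀ j, {i // m' i = j} ≃ {i // m i = j} := fun j =>
    Fintype.equivOfCardEq (by rw [← colContent_apply, ← colContent_apply, h])
  refine ⟨((Equiv.sigmaFiberEquiv m').symm.trans
    (Equiv.sigmaCongrRight e)).trans (Equiv.sigmaFiberEquiv m), funext fun i => ?_⟩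
  exact ((e (m' i)) ⟨i, rfl⟩).prop

variable [DecidableEq ι]

/-- The permutations carrying `m` to `m'` form a coset of the stabiliser of `m`. -/
lemma card_perm_comp_eq [Fintype κ] {m m' : ι → κ} (h : colContent m = colContent m') :
    Fintype.card {τ : Equiv.Perm ι // m ∘ τ = m'} = ∏ j, (colContent m j).factorial := by
  obtain ⟨τ₀, rfl⟩ := exists_perm_comp_eq h
  have e : {τ : Equiv.Perm ι // m ∘ τ = m ∘ τ₀} ≃ {τ : Equiv.Perm ι // m ∘ τ = m} :=
    (Equiv.mulRight τ₀⁻¹).subtypeEquiv fun τ => by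
      constructor <;> intro hτ <;> funext i
      · simpa using congrFun hτ (τ₀⁻¹ i)
      · simpa using congrFun hτ (τ₀ i)
  rw [Fintype.card_congr e, DomMulAct.stabilizer_card]
  simp only [colContent_apply]

lemma card_perm_comp_eq_zero {m m' : ι → κ} (h : colContent m ≠ colContent m') :
    Fintype.card {τ : Equiv.Perm ι // m ∘ τ = m'} = 0 :=
  Fintype.card_eq_zero_iff.mpr ⟨fun τ => h (by rw [← τ.2, colContent_comp])⟩

lemma apolar_monomial_multiExp (m m' : ι → κ) :
    apolar (monomial (multiExp m) (1 : ℂ)) (monomial (multiExp m') 1) =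
      C (if m = m' then 1 else 0) := by
  rw [apolar_monomial, one_smul, diffMonLinear_of_isHomogeneous
    (isHomogeneous_monomial _ (by rw [degree_multiExp, degree_multiExp])), coeff_monomial,
    descFactorialCoeff_self, Finset.prod_eq_one fun p hp => ?_, mul_one]
  · simp only [multiExp_injective.eq_iff]
  · rw [Finsupp.mem_support_iff, multiExp_apply] at hp
    rw [multiExp_apply, if_pos (by_contra fun h => hp (if_neg h)), Nat.factorial_one,
      Nat.cast_one]

lemma apolar_monomial_colContent [Fintype κ] (m m' : ι → κ) :
    apolar (monomial (colContent m) (1 : ℂ)) (monomial (colContent m') 1) =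
      C (Fintype.card {τ : Equiv.Perm ι // m ∘ τ = m'} : ℂ) := by
  rw [apolar_monomial, one_smul, diffMonLinear_of_isHomogeneous
    (isHomogeneous_monomial _ (by rw [degree_colContent, degree_colContent])), coeff_monomial]
  by_cases h : colContent m = colContent m'
  · rw [if_pos h, card_perm_comp_eq h, descFactorialCoeff_self, ← h, one_mul, Nat.cast_prod]
    exact congrArg C (Finset.prod_subset (Finset.subset_univ _) fun j _ hj => by
      simp [Finsupp.notMem_support_iff.mp hj])
  · rw [if_neg h, card_perm_comp_eq_zero h, zero_mul, Nat.cast_zero]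

lemma sum_sum_mul_card_perm_comp_eq [Fintype κ] {f : (ι → κ) → ℂ}
    (hf : ∀ m (τ : Equiv.Perm ι), f (m ∘ τ) = f m) (g : (ι → κ) → ℂ) :
    ∑ m, ∑ m', f m * g m' * (Fintype.card {τ : Equiv.Perm ι // m ∘ τ = m'} : ℂ) =
      (Fintype.card ι).factorial * ∑ m, f m * g m := by
  calc ∑ m, ∑ m', f m * g m' * (Fintype.card {τ : Equiv.Perm ι // m ∘ τ = m'} : ℂ)
      = ∑ m, ∑ τ : Equiv.Perm ι, ∑ m', if m ∘ τ = m' then f m * g m' else 0 := by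
        refine Finset.sum_congr rfl fun m _ => ?_
        rw [Finset.sum_comm]
        refine Finset.sum_congr rfl fun m' _ => ?_
        rw [Fintype.card_subtype, Finset.card_filter, Nat.cast_sum, Finset.mul_sum]
        simp only [Nat.cast_ite, Nat.cast_one, Nat.cast_zero, mul_ite, mul_one, mul_zero]
    _ = ∑ τ : Equiv.Perm ι, ∑ m, f (m ∘ τ) * g (m ∘ τ) := by
        rw [Finset.sum_comm]
        simp only [Fintype.sum_ite_eq, hf]
    _ = ∑ _τ : Equiv.Perm ι, ∑ m, f m * g m :=
        Finset.sum_congr rfl fun τ _ =>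
          Fintype.sum_equiv (Equiv.arrowCongr τ.symm (Equiv.refl κ)) _ _ fun m => rfl
    _ = (Fintype.card ι).factorial * ∑ m, f m * g m := by
        rw [Finset.sum_const, Finset.card_univ, Fintype.card_perm, nsmul_eq_mul]

end Multilinear

section SymmetricTensor

variable {n d : ℕ}

lemma eq_sum_multiExp {φ : MvPolynomial (Fin d × Fin n) ℂ} (hφ : φ ∈ Scomp n d fun _ => 1) :
    φ = ∑ m : Fin d → Fin n, coeff (multiExp m) φ • monomial (multiExp m) (1 : ℂ) := by
  ext b
  simp only [coeff_sum, coeff_smul, coeff_monomial, smul_eq_mul, mul_ite, mul_one, mul_zero]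
  by_cases hb : b ∈ φ.support
  · obtain ⟨m, rfl⟩ := exists_multiExp_eq (mem_Scomp_iff_s11.mp hφ b hb)
    simp only [multiExp_injective.eq_iff, Finset.sum_ite_eq', Finset.mem_univ, if_true]
  · rw [notMem_support_iff.mp hb]
    refine (Finset.sum_eq_zero fun m _ => ?_).symm
    split_ifs with h
    · rw [h, notMem_support_iff.mp hb]
    · rfl

lemma rename_snd_eq_sum_colContent {φ : MvPolynomial (Fin d × Fin n) ℂ}
    (hφ : φ ∈ Scomp n d fun _ => 1) :
    rename Prod.snd φ =
      ∑ m : Fin d → Fin n, coeff (multiExp m) φ • monomial (colContent m) (1 : ℂ) := by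
  conv_lhs => rw [eq_sum_multiExp hφ]
  simp only [map_sum, map_smul, rename_monomial]
  rfl

lemma apolar_eq_C_of_mem_Scomp_one {F ψ : MvPolynomial (Fin d × Fin n) ℂ}
    (hF : F ∈ Scomp n d fun _ => 1) (hψ : ψ ∈ Scomp n d fun _ => 1) :
    apolar F ψ = C (∑ m, coeff (multiExp m) F * coeff (multiExp m) ψ) := by
  conv_lhs => rw [eq_sum_multiExp hF, eq_sum_multiExp hψ]
  rw [apolar_sum_smul_sum_smul]
  simp only [apolar_monomial_multiExp, smul_eq_C_mul, ← C_mul, mul_ite,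
    mul_one, mul_zero, Finset.sum_ite_eq, Finset.mem_univ, if_true, ← map_sum]

lemma apolar_rename_snd_eq_C {F ψ : MvPolynomial (Fin d × Fin n) ℂ}
    (hF : F ∈ Scomp n d fun _ => 1) (hψ : ψ ∈ Scomp n d fun _ => 1) :
    apolar (rename Prod.snd F) (rename Prod.snd ψ) =
      C (∑ m, ∑ m', coeff (multiExp m) F * coeff (multiExp m') ψ *
        (Fintype.card {τ : Equiv.Perm (Fin d) // m ∘ τ = m'} : ℂ)) := by
  rw [rename_snd_eq_sum_colContent hF, rename_snd_eq_sum_colContent hψ,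
    apolar_sum_smul_sum_smul]
  simp only [apolar_monomial_colContent, smul_eq_C_mul, ← C_mul, ← map_sum]

lemma mapDomain_multiExp (m : Fin d → Fin n) (τ : Equiv.Perm (Fin d)) :
    (multiExp m).mapDomain (Prod.map τ id) = multiExp (m ∘ τ.symm) := by
  simp only [multiExp, Finsupp.mapDomain_finsetSum, Finsupp.mapDomain_single, Prod.map_apply,
    id_eq, Function.comp_apply]
  exact Fintype.sum_equiv τ _ _ fun i => by rw [Equiv.symm_apply_apply]

lemma coeff_multiExp_comp {F : MvPolynomial (Fin d × Fin n) ℂ} (hsym : IsSymm n d F)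
    (m : Fin d → Fin n) (τ : Equiv.Perm (Fin d)) :
    coeff (multiExp (m ∘ τ)) F = coeff (multiExp m) F := by
  have hinj : Function.Injective (Prod.map τ.symm (id : Fin n → Fin n)) :=
    τ.symm.injective.prodMap Function.injective_id
  have := coeff_rename_mapDomain _ hinj F (multiExp m)
  rwa [hsym, mapDomain_multiExp, Equiv.symm_symm] at this

/-- Polarization and apolarity: pairing the restitutions `π ψ` and `p_F` amounts to pairing
`ψ` with all the `d!` permuted copies of the symmetric tensor `F`. -/
theorem apolar_rename_snd_eq_factorial_smul {F ψ : MvPolynomial (Fin d × Fin n) ℂ}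
    (hF : F ∈ Scomp n d fun _ => 1) (hsym : IsSymm n d F) (hψ : ψ ∈ Scomp n d fun _ => 1) :
    apolar (rename Prod.snd F) (rename Prod.snd ψ) =
      (d.factorial : ℂ) • rename Prod.snd (apolar F ψ) := by
  rw [apolar_rename_snd_eq_C hF hψ, sum_sum_mul_card_perm_comp_eq (coeff_multiExp_comp hsym),
    Fintype.card_fin, apolar_eq_C_of_mem_Scomp_one hF hψ, rename_C, C_mul, smul_eq_C_mul]

end SymmetricTensor

section Restitution

variable {n d : ℕ}

lemma monomial_mapDomain_mem_Scomp (i : Fin d) (γ : Fin n →₀ ℕ) :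
    monomial (γ.mapDomain (Prod.mk i)) (1 : ℂ) ∈ Scomp n d (Pi.single i γ.degree) := by
  classical
  refine isWeightedHomogeneous_monomial _ _ _ (funext fun k => ?_)
  rw [weight_rowSingle_apply]
  by_cases hk : k = i
  · subst hk
    simp only [Finsupp.mapDomain_apply (Prod.mk_right_injective k), Pi.single_eq_same,
      Finsupp.degree_eq_sum]
  · rw [Pi.single_eq_of_ne hk]
    refine Finset.sum_eq_zero fun j _ => Finsupp.mapDomain_of_notMem_range _ _ ?_
    rintro ⟨j', hj'⟩
    exact hk (congrArg Prod.fst hj').symm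

lemma piL_monomial_mapDomain (i : Fin d) (γ : Fin n →₀ ℕ) :
    piL n d (monomial (γ.mapDomain (Prod.mk i)) (1 : ℂ)) = monomial γ 1 := by
  rw [piL_apply, rename_monomial, ← Finsupp.mapDomain_comp]
  exact congrArg (monomial · 1) Finsupp.mapDomain_id

lemma isHomogeneous_pF {F : MvPolynomial (Fin d × Fin n) ℂ} (hF : F ∈ Scomp n d fun _ => 1) :
    (pF n d F).IsHomogeneous d := by
  simpa [pF] using (isHomogeneous_of_mem_Scomp hF).rename_isHomogeneous (f := Prod.snd)

lemma apolar_pF_piL_eq_zero {F ψ : MvPolynomial (Fin d × Fin n) ℂ}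
    (hF : F ∈ Scomp n d fun _ => 1) (hsym : IsSymm n d F) (hψ : ψ ∈ Scomp n d fun _ => 1)
    (hann : ψ ∈ ann F) : apolar (pF n d F) (piL n d ψ) = 0 := by
  rw [pF, piL_apply, apolar_rename_snd_eq_factorial_smul hF hsym hψ, LinearMap.mem_ker.mp hann,
    map_zero, smul_zero]

lemma apolar_pF_piL_eq_zero_of_mem_single {F : MvPolynomial (Fin d × Fin n) ℂ}
    (hF : F ∈ Scomp n d fun _ => 1) (hsym : IsSymm n d F)
    {J : Ideal (MvPolynomial (Fin d × Fin n) ℂ)} (hJ : Submodule.restrictScalars ℂ J ≤ ann F)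
    (i : Fin d)
    (hpi : Submodule.map (piL n d)
        (Submodule.restrictScalars ℂ J ⊓ Scomp n d (Pi.single i d)) ≤
      Submodule.map (piL n d) (Submodule.restrictScalars ℂ J ⊓ Scomp n d fun _ => 1))
    {a : ℕ} {ψ : MvPolynomial (Fin d × Fin n) ℂ} (hψJ : ψ ∈ J)
    (hψ : ψ ∈ Scomp n d (Pi.single i a)) : apolar (pF n d F) (piL n d ψ) = 0 := by
  have hχ : (piL n d ψ).IsHomogeneous a := by
    simpa [piL_apply] using (isHomogeneous_of_mem_Scomp hψ).rename_isHomogeneous (f := Prod.snd)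
  rcases lt_or_ge d a with had | had
  · exact apolar_eq_zero_of_lt (isHomogeneous_pF hF) hχ had
  refine apolar_eq_zero_of_forall_monomial_mul (isHomogeneous_pF hF) hχ fun γ hγ => ?_
  have hmul : monomial (γ.mapDomain (Prod.mk i)) 1 * ψ ∈ Scomp n d (Pi.single i d) := by
    have := mul_mem_Scomp (monomial_mapDomain_mem_Scomp i γ) hψ
    rwa [← Pi.single_add, hγ, Nat.sub_add_cancel had] at this
  obtain ⟨ψ', ⟨hψ'J, hψ'⟩, hψ'eq⟩ := hpi ⟨_, ⟨J.mul_mem_left _ hψJ, hmul⟩, rfl⟩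
  have hπ : piL n d (monomial (γ.mapDomain (Prod.mk i)) 1 * ψ) = monomial γ 1 * piL n d ψ := by
    rw [piL_apply, map_mul, ← piL_apply, ← piL_apply, piL_monomial_mapDomain]
  rw [← hπ, ← hψ'eq]
  exact apolar_pF_piL_eq_zero hF hsym hψ' (hJ hψ'J)

lemma apolar_pF_rho_eq_zero_of_mem_Scomp {F : MvPolynomial (Fin d × Fin n) ℂ}
    (hF : F ∈ Scomp n d fun _ => 1) (hsym : IsSymm n d F)
    {J : Ideal (MvPolynomial (Fin d × Fin n) ℂ)} (hJ : Submodule.restrictScalars ℂ J ≤ ann F)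
    (hd : 0 < d)
    (hpi : Submodule.map (piL n d)
        (Submodule.restrictScalars ℂ J ⊓ Scomp n d (Pi.single ⟨0, hd⟩ d)) ≤
      Submodule.map (piL n d) (Submodule.restrictScalars ℂ J ⊓ Scomp n d fun _ => 1))
    {u : Fin d → ℕ} {ψ : MvPolynomial (Fin d × Fin n) ℂ} (hψJ : ψ ∈ J) (hψ : ψ ∈ Scomp n d u) :
    apolar (pF n d F) (rho n d ψ) = 0 := by
  by_cases hu : ∀ i : Fin d, (i : ℕ) ≠ 0 → u i = 0
  · have hu₀ : u = Pi.single ⟨0, hd⟩ (u ⟨0, hd⟩) := funext fun i => by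
      by_cases hi : (i : ℕ) = 0
      · obtain rfl : i = ⟨0, hd⟩ := Fin.ext hi
        rw [Pi.single_eq_same]
      · rw [Pi.single_eq_of_ne (fun h => hi (congrArg Fin.val h)), hu i hi]
    rw [rho_eq_piL_of_mem_Scomp hu hψ]
    exact apolar_pF_piL_eq_zero_of_mem_single hF hsym hJ _ hpi hψJ (hu₀ ▸ hψ)
  · obtain ⟨i, hi, hui⟩ := not_forall₂.mp hu
    rw [rho_eq_zero_of_mem_Scomp hi hui hψ, map_zero]

end Restitution

theorem stmt_11_general (n d : ℕ) (hd : 0 < d)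
    (F : MvPolynomial (Fin d × Fin n) ℂ)
    (hF : F ∈ Scomp n d fun _ => 1) (hsym : IsSymm n d F)
    (J : Ideal (MvPolynomial (Fin d × Fin n) ℂ)) (hhom : IsHomogS n d J)
    (hJ : Submodule.restrictScalars ℂ J ≤ ann F)
    (hpi : Submodule.map (piL n d)
        (Submodule.restrictScalars ℂ J ⊓ Scomp n d fun i => if (i : ℕ) = 0 then d else 0) ≤
      Submodule.map (piL n d) (Submodule.restrictScalars ℂ J ⊓ Scomp n d fun _ => 1)) :
    Submodule.restrictScalars ℂ (Ideal.map (rho n d) J) ≤ ann (pF n d F) := by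
  have hfirst : (fun i : Fin d => if (i : ℕ) = 0 then d else 0) = Pi.single ⟨0, hd⟩ d :=
    funext fun i => by simp [Pi.single_apply, Fin.ext_iff]
  rw [hfirst] at hpi
  suffices h : J ≤ (annIdeal (pF n d F)).comap (rho n d) from
    fun _ hx => Ideal.map_le_iff_le_comap.mpr h hx
  have hcomp : ∀ u, Submodule.restrictScalars ℂ J ⊓ Scomp n d u ≤
      Submodule.restrictScalars ℂ ((annIdeal (pF n d F)).comap (rho n d)) := fun _ _ hφ =>
    apolar_pF_rho_eq_zero_of_mem_Scomp hF hsym hJ hd hpi hφ.1 hφ.2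
  exact fun ψ hψ => hhom.trans_le (iSup_le hcomp) hψ

/-- from the proof of Theorem 5.4: if `F` is a concise symmetric
tensor and `J ⊆ Ann(F)` is a homogeneous ideal with
`π(J_{(d,0,…,0)}) ⊆ π(J_𝟏)`, then `ρ(J) ⊆ Ann(p_F)`. -/
theorem stmt_11 (n d : ℕ) (hn : 0 < n) (hd : 0 < d)
    (F : MvPolynomial (Fin d × Fin n) ℂ)
    (hF : F ∈ Scomp n d fun _ => 1) (hsym : IsSymm n d F) (hconc : Concise n d F)
    (J : Ideal (MvPolynomial (Fin d × Fin n) ℂ)) (hhom : IsHomogS n d J)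
    (hJ : Submodule.restrictScalars ℂ J ≤ ann F)
    (hpi : Submodule.map (piL n d)
        (Submodule.restrictScalars ℂ J ⊓ Scomp n d fun i => if (i : ℕ) = 0 then d else 0) ≤
      Submodule.map (piL n d) (Submodule.restrictScalars ℂ J ⊓ Scomp n d fun _ => 1)) :
    Submodule.restrictScalars ℂ (Ideal.map (rho n d) J) ≤ ann (pF n d F) :=
  stmt_11_general n d hd F hF hsym J hhom hJ hpi

end BorderComon
end
end
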